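/- For every d ≥ 2 there exists M_d > 0 such that the largest Schmidt coefficient μ₁ of any unit vector in Parthasarathy's completely entangled subspace S ⊂ ℂᵈ ⊗ ℂᵈ satisfies μ₁² ≤ 1 − M_d; one may take M_d = inf over unit simple tensors x ⊗ y of ‖P_L(x⊗y)‖², and this infimum is attained and strictly positive. -/

import Mathlib

/-! A simple tensor `x ⊗ y` is orthogonal to `u_λ ⊗ u_λ` iff `p_x(λ̄) p_y(λ̄) = 0`, where `p_x` is
the polynomial with coefficient vector `x`. The product `p_x p_y` has degree at most `2d - 2`, so
vanishing at `2d - 1` points forces `x = 0` or `y = 0`: `Lᗮ` contains no unit simple tensor, and the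
continuous function `z ↦ ‖P_L z‖²` has a positive minimum `M` on the compact set of unit simple
tensors. For a unit `ξ ∈ Lᗮ` with Schmidt decomposition `∑ μᵢ uᵢ ⊗ vᵢ` we have
`μᵢ = ⟪uᵢ ⊗ vᵢ, ξ⟫ = ⟪(1 - P_L)(uᵢ ⊗ vᵢ), ξ⟫`, hence `μᵢ² ≤ 1 - ‖P_L(uᵢ ⊗ vᵢ)‖² ≤ 1 - M`. -/

noncomputable section

/-- The simple tensor `x ⊗ y` of two vectors, realized in `EuclideanSpace ℂ (ι × κ)`. -/
def tens {ι κ : Type*} [Fintype ι] [Fintype κ] (x : EuclideanSpace ℂ ι) (y : EuclideanSpace ℂ κ) :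
    EuclideanSpace ℂ (ι × κ) :=
  WithLp.toLp 2 (fun p => x p.1 * y p.2)

/-- `h = ∑ i, μ i • (u i ⊗ v i)` is a Schmidt decomposition of `h`. -/
def IsSchmidt {ι κ : Type*} [Fintype ι] [Fintype κ] (h : EuclideanSpace ℂ (ι × κ)) {r : ℕ}
    (μ : Fin r → ℝ) (u : Fin r → EuclideanSpace ℂ ι) (v : Fin r → EuclideanSpace ℂ κ) : Prop :=
  (∀ i, 0 ≤ μ i) ∧ Orthonormal ℂ u ∧ Orthonormal ℂ v ∧
    h = ∑ i, (μ i : ℂ) • tens (u i) (v i)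

/-- The vector `u_λ = (1, λ, λ², …, λ^{d-1}) = ∑_k λᵏ e_k ∈ ℂᵈ`. -/
def uVec (d : ℕ) (lam : ℂ) : EuclideanSpace ℂ (Fin d) :=
  WithLp.toLp 2 (fun k => lam ^ (k : ℕ))

section SimpleTensor

variable {ι κ : Type*} [Fintype ι] [Fintype κ]

lemma inner_tens (a x : EuclideanSpace ℂ ι) (b y : EuclideanSpace ℂ κ) :
    inner ℂ (tens a b) (tens x y) = inner ℂ a x * inner ℂ b y := by
  simp only [PiLp.inner_apply, RCLike.inner_apply, tens, Finset.sum_mul_sum, map_mul,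
    ← Finset.univ_product_univ, Finset.sum_product]
  exact Finset.sum_congr rfl fun i _ => Finset.sum_congr rfl fun j _ => by ring

lemma norm_tens (x : EuclideanSpace ℂ ι) (y : EuclideanSpace ℂ κ) :
    ‖tens x y‖ = ‖x‖ * ‖y‖ := by
  have h := inner_tens x x y y
  simp only [inner_self_eq_norm_sq_to_K] at h
  exact (sq_eq_sq₀ (norm_nonneg _) (by positivity)).1 (by rw [mul_pow]; exact_mod_cast h)

lemma continuous_tens :
    Continuous fun p : EuclideanSpace ℂ ι × EuclideanSpace ℂ κ => tens p.1 p.2 :=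
  (PiLp.continuous_toLp 2 _).comp <| continuous_pi fun q => by fun_prop

lemma tens_smul_smul {c : ℂ} (hc : c ≠ 0) (x : EuclideanSpace ℂ ι) (y : EuclideanSpace ℂ κ) :
    tens (c⁻¹ • x) (c • y) = tens x y := by
  ext p
  simp only [tens, PiLp.toLp_apply, PiLp.smul_apply, smul_eq_mul]
  field_simp

lemma exists_unit_of_norm_tens_eq_one {x : EuclideanSpace ℂ ι} {y : EuclideanSpace ℂ κ}
    (h : ‖tens x y‖ = 1) : ∃ x' y', ‖x'‖ = 1 ∧ ‖y'‖ = 1 ∧ tens x' y' = tens x y := by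
  have hx : x ≠ 0 := by rintro rfl; simp [norm_tens] at h
  have hx' : (‖x‖ : ℂ) ≠ 0 := by exact_mod_cast norm_ne_zero_iff.2 hx
  refine ⟨(‖x‖ : ℂ)⁻¹ • x, (‖x‖ : ℂ) • y, norm_smul_inv_norm hx, ?_, tens_smul_smul hx' x y⟩
  rw [norm_smul, Complex.norm_real, norm_norm, ← norm_tens, h]

lemma exists_unit_tens_forall_le [Nonempty ι] [Nonempty κ] {f : EuclideanSpace ℂ (ι × κ) → ℝ}
    (hf : Continuous f) :
    ∃ x y, ‖tens x y‖ = 1 ∧ ∀ x' y', ‖tens x' y'‖ = 1 → f (tens x y) ≤ f (tens x' y') := by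
  obtain ⟨e, he⟩ := exists_norm_eq (EuclideanSpace ℂ ι) zero_le_one
  obtain ⟨e', he'⟩ := exists_norm_eq (EuclideanSpace ℂ κ) zero_le_one
  obtain ⟨⟨x, y⟩, ⟨hx, hy⟩, hmin⟩ :=
    ((isCompact_sphere (0 : EuclideanSpace ℂ ι) 1).prod (isCompact_sphere 0 1)).exists_isMinOn
      ⟨(e, e'), by simp [he], by simp [he']⟩ (hf.comp continuous_tens).continuousOn
  simp only [mem_sphere_iff_norm, sub_zero] at hx hy
  refine ⟨x, y, by rw [norm_tens, hx, hy, one_mul], fun x' y' h => ?_⟩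
  obtain ⟨x'', y'', hx'', hy'', heq⟩ := exists_unit_of_norm_tens_eq_one h
  rw [← heq]
  exact hmin (a := (x'', y'')) ⟨by simp [hx''], by simp [hy'']⟩

lemma IsSchmidt.inner_tens_eq {h : EuclideanSpace ℂ (ι × κ)} {r : ℕ} {μ : Fin r → ℝ}
    {u : Fin r → EuclideanSpace ℂ ι} {v : Fin r → EuclideanSpace ℂ κ} (hs : IsSchmidt h μ u v)
    (i : Fin r) : inner ℂ (tens (u i) (v i)) h = μ i := by
  classical
  obtain ⟨-, hu, hv, rfl⟩ := hs
  simp [inner_tens, orthonormal_iff_ite.1 hu, orthonormal_iff_ite.1 hv]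

end SimpleTensor

section Vandermonde

open Polynomial

lemma inner_uVec {d : ℕ} (lam : ℂ) (x : EuclideanSpace ℂ (Fin d)) :
    inner ℂ (uVec d lam) x = (ofFn d x.ofLp).eval (starRingEnd ℂ lam) := by
  simp [PiLp.inner_apply, uVec, ofFn_eq_sum_monomial, eval_finsetSum]

lemma eq_zero_or_eq_zero_of_tens_mem_orthogonal {d : ℕ} (hd : 0 < d) {G : Finset ℂ}
    (hG : 2 * d - 1 ≤ G.card) {x y : EuclideanSpace ℂ (Fin d)}
    (h : tens x y ∈ (Submodule.span ℂ {w | ∃ lam ∈ G, w = tens (uVec d lam) (uVec d lam)})ᗮ) :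
    x = 0 ∨ y = 0 := by
  have heval : ∀ lam : G, (ofFn d x.ofLp * ofFn d y.ofLp).eval (starRingEnd ℂ lam) = 0 := by
    rintro ⟨lam, hlam⟩
    have := (Submodule.mem_orthogonal _ _).1 h _ (Submodule.subset_span ⟨lam, hlam, rfl⟩)
    rwa [inner_tens, inner_uVec, inner_uVec, ← eval_mul] at this
  have hdeg : (ofFn d x.ofLp * ofFn d y.ofLp).natDegree < Fintype.card G := by
    have := natDegree_mul_le (p := ofFn d x.ofLp) (q := ofFn d y.ofLp)
    have := ofFn_natDegree_lt hd x.ofLp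
    have := ofFn_natDegree_lt hd y.ofLp
    rw [Fintype.card_coe]
    omega
  have hinj : Function.Injective fun lam : G => starRingEnd ℂ lam :=
    (starRingEnd ℂ).injective.comp Subtype.val_injective
  rcases mul_eq_zero.1 (eq_zero_of_natDegree_lt_card_of_eval_eq_zero _ hinj heval hdeg) with hx | hx
  · exact .inl (WithLp.ofLp_injective 2 (injective_ofFn d (hx.trans (map_zero _).symm)))
  · exact .inr (WithLp.ofLp_injective 2 (injective_ofFn d (hx.trans (map_zero _).symm)))

end Vandermonde

section Projection

variable {𝕜 E : Type*} [RCLike 𝕜] [NormedAddCommGroup E] [InnerProductSpace 𝕜 E]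

lemma norm_inner_sq_le_of_mem_orthogonal (K : Submodule 𝕜 E) [K.HasOrthogonalProjection]
    (z : E) {ξ : E} (hξ : ξ ∈ Kᗮ) :
    ‖inner 𝕜 z ξ‖ ^ 2 ≤ (‖z‖ ^ 2 - ‖K.orthogonalProjectionOnto z‖ ^ 2) * ‖ξ‖ ^ 2 := by
  have hinner : inner 𝕜 z ξ = inner 𝕜 (Kᗮ.starProjection z) ξ := by
    rw [Submodule.inner_starProjection_left_eq_right, Submodule.starProjection_eq_self_iff.2 hξ]
  rw [hinner, Submodule.norm_sq_eq_add_norm_sq_projection z K, add_sub_cancel_left, ← mul_pow]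
  exact pow_le_pow_left₀ (norm_nonneg _) (norm_inner_le_norm _ _) 2

end Projection

/-- for every `d ≥ 2` there is `M_d > 0`, namely the (attained) infimum over
unit simple tensors `x ⊗ y` of `‖P_L(x ⊗ y)‖²`, such that the largest Schmidt coefficient `μ₁`
of every unit vector of Parthasarathy's completely entangled subspace `S = L^⊥` satisfies
`μ₁² ≤ 1 - M_d`. -/
theorem parthasarathy_schmidt_bound (d : ℕ) (hd : 2 ≤ d) (G : Finset ℂ)
    (hG : G.card = 2 * d - 1) (L : Submodule ℂ (EuclideanSpace ℂ (Fin d × Fin d)))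
    (hL : L = Submodule.span ℂ {w | ∃ lam ∈ G, w = tens (uVec d lam) (uVec d lam)}) :
    ∃ M : ℝ, 0 < M ∧
      IsGLB {t : ℝ | ∃ x y : EuclideanSpace ℂ (Fin d),
        ‖tens x y‖ = 1 ∧ t = ‖Submodule.orthogonalProjectionOnto L (tens x y)‖ ^ 2} M ∧
      (∃ x y : EuclideanSpace ℂ (Fin d),
        ‖tens x y‖ = 1 ∧ ‖Submodule.orthogonalProjectionOnto L (tens x y)‖ ^ 2 = M) ∧
      (∀ ξ ∈ Lᗮ, ‖ξ‖ = 1 → ∀ (r : ℕ) (μ : Fin r → ℝ)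
        (u v : Fin r → EuclideanSpace ℂ (Fin d)) (μ₁ : ℝ),
        IsSchmidt ξ μ u v → IsGreatest (Set.range μ) μ₁ → μ₁ ^ 2 ≤ 1 - M) := by
  have : Nonempty (Fin d) := ⟨⟨0, by omega⟩⟩
  obtain ⟨x₀, y₀, h₀, hmin⟩ :=
    exists_unit_tens_forall_le (f := fun z => ‖L.orthogonalProjectionOnto z‖ ^ 2) (by fun_prop)
  refine ⟨_, ?_, ⟨?_, fun b hb => hb ⟨x₀, y₀, h₀, rfl⟩⟩, ⟨x₀, y₀, h₀, rfl⟩, ?_⟩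
  · refine pow_pos (norm_pos_iff.2 fun hP => ?_) 2
    rw [Submodule.orthogonalProjectionOnto_eq_zero_iff, hL] at hP
    rcases eq_zero_or_eq_zero_of_tens_mem_orthogonal (by omega) hG.ge hP with rfl | rfl <;>
      simp [norm_tens] at h₀
  · rintro _ ⟨x, y, h, rfl⟩
    exact hmin x y h
  · rintro ξ hξ hξ1 r μ u v μ₁ hs ⟨⟨i, rfl⟩, -⟩
    have hz : ‖tens (u i) (v i)‖ = 1 := by rw [norm_tens, hs.2.1.1 i, hs.2.2.1.1 i, one_mul]
    have hbound := norm_inner_sq_le_of_mem_orthogonal L (tens (u i) (v i)) hξ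
    rw [hs.inner_tens_eq, hz, hξ1, Complex.norm_real, Real.norm_of_nonneg (hs.1 i)] at hbound
    linarith [hmin _ _ hz]
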